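/- arXiv:2603.22640 — 9 statements merged into one kernel-verified Lean document; each statement's English description precedes it below -/
import Mathlib

section
/- Every left-orderable group is diffuse; that is, if G admits a total order invariant under left multiplication, then for every non-empty finite subset C of G there exists c in C such that for every non-identity g in G, either g·c is not in C or g⁻¹·c is not in C. -/
theorem eq_one_of_mul_le_self_of_inv_mul_le_self {G : Type*} [Group G] [PartialOrder G]
    (hmul : ∀ g a b : G, a ≤ b → g * a ≤ g * b) {g c : G}
    (hg : g * c ≤ c) (hg' : g⁻¹ * c ≤ c) : g = 1 := by
  have hc : c ≤ g⁻¹ * c := by simpa using hmul g⁻¹ _ _ hg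
  have hfix : g⁻¹ * c = c := le_antisymm hg' hc
  simpa using hfix

/-- Every left-orderable group is diffuse: if `G` carries a linear order invariant
under left multiplication, then every non-empty finite subset `C` of `G` has an
extremal element `c`, i.e. for every `g ≠ 1`, `g * c ∉ C` or `g⁻¹ * c ∉ C`. -/
theorem leftOrderable_diffuse {G : Type*} [Group G] [LinearOrder G]
    (hmul : ∀ g a b : G, a ≤ b → g * a ≤ g * b) :
    ∀ C : Finset G, C.Nonempty →
      ∃ c ∈ C, ∀ g : G, g ≠ 1 → g * c ∉ C ∨ g⁻¹ * c ∉ C := by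
  intro C hC
  refine ⟨C.max' hC, C.max'_mem hC, fun g hg => ?_⟩
  by_contra! hmem
  exact hg <|
    eq_one_of_mul_le_self_of_inv_mul_le_self hmul (C.le_max' _ hmem.1) (C.le_max' _ hmem.2)
end

section
/- Every diffuse group satisfies the unique product property: if G is diffuse, then for all non-empty finite subsets A, B of G there exist a ∈ A and b ∈ B such that whenever a'b' = ab with a' ∈ A and b' ∈ B, then a' = a and b' = b. -/
open scoped Pointwise

/-- Every diffuse group satisfies the unique product property. -/
theorem diffuse_implies_uniqueProductProperty {G : Type*} [Group G]
    (hdiff : ∀ C : Finset G, C.Nonempty →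
      ∃ c ∈ C, ∀ g : G, g ≠ 1 → g * c ∉ C ∨ g⁻¹ * c ∉ C) :
    ∀ A B : Finset G, A.Nonempty → B.Nonempty →
      ∃ a ∈ A, ∃ b ∈ B, ∀ a' ∈ A, ∀ b' ∈ B, a' * b' = a * b → a' = a ∧ b' = b := by
  classical
  intro A B hA hB
  obtain ⟨c, hcC, hext⟩ := hdiff (A * B) (hA.mul hB)
  rw [Finset.mem_mul] at hcC
  obtain ⟨a, ha, b, hb, hab⟩ := hcC
  refine ⟨a, ha, b, hb, ?_⟩
  intro a' ha' b' hb' heq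
  have haa : a' = a := by
    by_contra hne
    have hg : a' * a⁻¹ ≠ 1 :=
      fun h => hne (mul_inv_eq_one.mp h)
    rcases hext (a' * a⁻¹) hg with h | h
    · exact h (by rw [← hab]; simpa [mul_assoc] using Finset.mul_mem_mul ha' hb)
    · refine h ?_
      have : (a' * a⁻¹)⁻¹ * c = a * b' := by
        rw [← hab, ← heq]; group
      rw [this]; exact Finset.mul_mem_mul ha hb'
  subst haa
  exact ⟨rfl, mul_left_cancel heq⟩
end

section
/- Let K be a field and G a torsion-free group such that K[G] has only trivial units and such that K[G] is a prime ring. Then K[G] has no zero divisors. -/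
/-!
If `x * y = 0` with `x, y ≠ 0`, primeness gives `r` with `t = y * r * x ≠ 0`, and
`t * t = y * r * (x * y) * r * x = 0`, so `1 - t` is a unit, hence `t = 1 - single g a`.
Such an element never squares to zero unless it vanishes: for `g = 1` it is a constant and `K`
is reduced, while for `g ≠ 1` torsion-freeness gives `g * g ≠ 1`, so the coefficient of `1` in
`(1 - single g a) ^ 2 = 1 - 2 • single g a + single (g * g) (a * a)` is `1`.
-/

namespace MonoidAlgebra

variable {k G : Type*} [Ring k] [MulOneClass G]

theorem coeff_one_sub_single_mul_self_one {g : G} (hg : g ≠ 1) (hgg : g * g ≠ 1) (a : k) :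
    ((1 - single g a) * (1 - single g a)).coeff 1 = 1 := by
  classical
  have expand : (1 - single g a) * (1 - single g a) =
      single 1 1 - single g a - single g a + single (g * g) (a * a) := by
    rw [← single_mul_single, ← one_def]; noncomm_ring
  simp only [expand, coeff_add, coeff_sub, coeff_single, Finsupp.add_apply, Finsupp.sub_apply,
    Finsupp.single_apply, hg, hgg, if_true, if_false, sub_zero, add_zero]

theorem one_sub_single_eq_zero_of_mul_self_eq_zero [IsDomain k] {g : G}
    (hg : g ≠ 1 → g * g ≠ 1) {a : k} (h : (1 - single g a) * (1 - single g a) = 0) :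
    1 - single g a = 0 := by
  by_cases hg1 : g = 1
  · subst hg1
    rw [one_def, ← single_sub, single_mul_single, single_eq_zero, mul_self_eq_zero] at h
    rw [one_def, ← single_sub, h, single_zero]
  · have := coeff_one_sub_single_mul_self_one hg1 (hg hg1) a
    rw [h, coeff_zero, Finsupp.zero_apply] at this
    exact absurd this.symm one_ne_zero

end MonoidAlgebra

open MonoidAlgebra

/-- Let `K` be a field and `G` a torsion-free group such that `K[G]` has only trivial
units and `K[G]` is a prime ring.  Then `K[G]` has no zero divisors. -/
theorem trivial_units_prime_no_zero_divisors {K : Type*} [Field K] {G : Type*} [Group G]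
    (htf : ∀ g : G, g ≠ 1 → ¬IsOfFinOrder g)
    (htu : ∀ u : (MonoidAlgebra K G)ˣ, ∃ k : K, k ≠ 0 ∧ ∃ g : G,
      (u : MonoidAlgebra K G) = MonoidAlgebra.single g k)
    (hprime : ∀ x y : MonoidAlgebra K G, (∀ t : MonoidAlgebra K G, x * t * y = 0) →
      x = 0 ∨ y = 0) :
    ∀ x y : MonoidAlgebra K G, x * y = 0 → x = 0 ∨ y = 0 := by
  intro x y hxy
  by_contra! hne
  obtain ⟨r, ht⟩ : ∃ r, y * r * x ≠ 0 := by
    by_contra! h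
    exact (hprime y x h).elim hne.2 hne.1
  have ht2 : (y * r * x) * (y * r * x) = 0 := by
    rw [show (y * r * x) * (y * r * x) = y * r * (x * y) * (r * x) by noncomm_ring, hxy,
      mul_zero, zero_mul]
  have hunit : IsUnit (1 - y * r * x) := IsNilpotent.isUnit_one_sub ⟨2, by rw [pow_two, ht2]⟩
  obtain ⟨a, -, g, hg⟩ := htu hunit.unit
  have ht_eq : y * r * x = 1 - single g a := by rw [← hg, IsUnit.unit_spec, sub_sub_cancel]
  have hsq : ∀ h : G, h ≠ 1 → h * h ≠ 1 := fun h hh1 hhh =>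
    htf h hh1 (isOfFinOrder_iff_pow_eq_one.mpr ⟨2, two_pos, by rwa [pow_two]⟩)
  rw [ht_eq] at ht ht2
  exact ht (one_sub_single_eq_zero_of_mul_self_eq_zero (hsq g) ht2)
end

section
/- Let K be a field, G a group, α a nontrivial unit of K[G] with inverse β having supports A and B respectively, and suppose 1 ∈ A ∩ B. Then the sets E = B⁻¹A and F = BA⁻¹ witness the failure of the unique product property: every element of the multiset EF occurs with multiplicity at least 2. -/
/-!
If `a * b ≠ 1` with `a ∈ A`, `b ∈ B`, the coefficient of `a * b` in `α * β = 1` vanishes, so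
`a * b` is not a unique product of `A` and `B`: a unique one would have coefficient
`α a * β b ≠ 0`. Write `e = x⁻¹ * y` and `f = z * w⁻¹`, so `e * f = x⁻¹ * (y * z) * w⁻¹`.
If `y * z ≠ 1`, translating a second representation of `y * z` gives one of `e * f`.
If `y * z = 1` but `y ≠ 1`, then `x⁻¹ * w⁻¹` is a second representation (as `1 ∈ A ∩ B`).
If `y = z = 1`, invert a second representation of `w * x`, or, when `w * x = 1`, use
`a * a⁻¹` for some `a ∈ A` other than `w`.
-/

open scoped Pointwise

open Finset

theorem UniqueMul.exists_of_not {G : Type*} [Mul G] {A B : Finset G} {a0 b0 : G}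
    (h : ¬UniqueMul A B a0 b0) :
    ∃ a ∈ A, ∃ b ∈ B, a * b = a0 * b0 ∧ (a, b) ≠ (a0, b0) := by
  simpa [UniqueMul, Prod.ext_iff] using h

theorem UniqueMul.of_translate {G : Type*} [Semigroup G] [IsCancelMul G] {A B E F : Finset G}
    {a0 b0 x w : G} (hE : ∀ a ∈ A, x * a ∈ E) (hF : ∀ b ∈ B, b * w ∈ F)
    (h : UniqueMul E F (x * a0) (b0 * w)) : UniqueMul A B a0 b0 := by
  intro a b ha hb hab
  have hprod : x * a * (b * w) = x * a0 * (b0 * w) := by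
    simp only [mul_assoc, ← mul_assoc a, hab]
  obtain ⟨hxa, hbw⟩ := h (hE a ha) (hF b hb) hprod
  exact ⟨mul_left_cancel hxa, mul_right_cancel hbw⟩

theorem UniqueMul.of_inv {G : Type*} [DivisionMonoid G] [DecidableEq G] {A B E F : Finset G}
    {a0 b0 : G} (hE : B⁻¹ ⊆ E) (hF : A⁻¹ ⊆ F) (h : UniqueMul E F b0⁻¹ a0⁻¹) :
    UniqueMul A B a0 b0 := by
  intro a b ha hb hab
  have hprod : b⁻¹ * a⁻¹ = b0⁻¹ * a0⁻¹ := by rw [← mul_inv_rev, hab, mul_inv_rev]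
  obtain ⟨hb', ha'⟩ := h (hE (inv_mem_inv hb)) (hF (inv_mem_inv ha)) hprod
  exact ⟨inv_injective ha', inv_injective hb'⟩

theorem MonoidAlgebra.not_uniqueMul_support_of_mul_eq_one {R M : Type*} [Semiring R]
    [NoZeroDivisors R] [MulOneClass M] {f g : MonoidAlgebra R M} (hfg : f * g = 1)
    {a b : M} (ha : a ∈ f.coeff.support) (hb : b ∈ g.coeff.support) (hab : a * b ≠ 1) :
    ¬UniqueMul f.coeff.support g.coeff.support a b := fun h => by
  have hcoeff := MonoidAlgebra.coeff_mul_mul_of_uniqueMul h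
  rw [hfg, MonoidAlgebra.one_def, MonoidAlgebra.coeff_single,
    Finsupp.single_eq_of_ne hab] at hcoeff
  exact mul_ne_zero (Finsupp.mem_support_iff.1 ha) (Finsupp.mem_support_iff.1 hb) hcoeff.symm

section InvMulMulInv

variable {G : Type*} [Group G] [DecidableEq G] {A B : Finset G} {x y z w : G}

theorem not_uniqueMul_inv_mul_mul_inv_of_mul_ne_one
    (hAB : ∀ a ∈ A, ∀ b ∈ B, a * b ≠ 1 → ¬UniqueMul A B a b)
    (hx : x ∈ B) (hy : y ∈ A) (hz : z ∈ B) (hw : w ∈ A) (hyz : y * z ≠ 1) :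
    ¬UniqueMul (B⁻¹ * A) (B * A⁻¹) (x⁻¹ * y) (z * w⁻¹) := fun h =>
  hAB y hy z hz hyz <| h.of_translate (fun _ ha => mul_mem_mul (inv_mem_inv hx) ha)
    (fun _ hb => mul_mem_mul hb (inv_mem_inv hw))

theorem not_uniqueMul_inv_mul_mul_inv_of_mul_eq_one (h1A : 1 ∈ A) (h1B : 1 ∈ B)
    (hx : x ∈ B) (hw : w ∈ A) (hyz : y * z = 1) (hy : y ≠ 1) :
    ¬UniqueMul (B⁻¹ * A) (B * A⁻¹) (x⁻¹ * y) (z * w⁻¹) := fun h => by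
  have hprod : x⁻¹ * w⁻¹ = x⁻¹ * y * (z * w⁻¹) := by
    rw [mul_assoc, ← mul_assoc y, hyz, one_mul]
  have hxy := (h (subset_mul_left _ h1A (inv_mem_inv hx))
    (subset_mul_right _ h1B (inv_mem_inv hw)) hprod).1
  exact hy (mul_eq_left.1 hxy.symm)

theorem not_uniqueMul_inv_mul_mul_inv_inv
    (hAB : ∀ a ∈ A, ∀ b ∈ B, a * b ≠ 1 → ¬UniqueMul A B a b) (hA : 1 < #A)
    (h1A : 1 ∈ A) (h1B : 1 ∈ B) (hx : x ∈ B) (hw : w ∈ A) :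
    ¬UniqueMul (B⁻¹ * A) (B * A⁻¹) x⁻¹ w⁻¹ := fun h => by
  have hE : B⁻¹ ⊆ B⁻¹ * A := subset_mul_left _ h1A
  have hF : A⁻¹ ⊆ B * A⁻¹ := subset_mul_right _ h1B
  by_cases hwx : w * x = 1
  · obtain ⟨a, ha, haw⟩ := exists_mem_ne hA w
    have hprod : a * a⁻¹ = x⁻¹ * w⁻¹ := by rw [mul_inv_cancel, ← mul_inv_rev, hwx, inv_one]
    have hax := (h (subset_mul_right _ (by simpa using h1B) ha) (hF (inv_mem_inv ha)) hprod).1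
    exact haw (hax.trans (inv_eq_of_mul_eq_one_left hwx))
  · exact hAB w hw x hx hwx (h.of_inv hE hF)

theorem not_uniqueMul_inv_mul_mul_inv
    (hAB : ∀ a ∈ A, ∀ b ∈ B, a * b ≠ 1 → ¬UniqueMul A B a b) (hA : 1 < #A)
    (h1A : 1 ∈ A) (h1B : 1 ∈ B) :
    ∀ e ∈ B⁻¹ * A, ∀ f ∈ B * A⁻¹, ¬UniqueMul (B⁻¹ * A) (B * A⁻¹) e f := by
  intro e he f hf
  obtain ⟨_, hx', y, hy, rfl⟩ := mem_mul.1 he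
  obtain ⟨x, hx, rfl⟩ := mem_inv.1 hx'
  obtain ⟨z, hz, _, hw', rfl⟩ := mem_mul.1 hf
  obtain ⟨w, hw, rfl⟩ := mem_inv.1 hw'
  by_cases hyz : y * z = 1
  · by_cases hy1 : y = 1
    · obtain rfl := hy1
      obtain rfl : z = 1 := by simpa using hyz
      simpa using not_uniqueMul_inv_mul_mul_inv_inv hAB hA h1A h1B hx hw
    · exact not_uniqueMul_inv_mul_mul_inv_of_mul_eq_one h1A h1B hx hw hyz hy1
  · exact not_uniqueMul_inv_mul_mul_inv_of_mul_ne_one hAB hx hy hz hw hyz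

end InvMulMulInv

theorem unit_supports_non_unique_products_general {K : Type*} [Field K] {G : Type*} [Group G]
    [DecidableEq G] (α β : MonoidAlgebra K G)
    (hαβ : α * β = 1)
    (hnontriv : 2 ≤ α.coeff.support.card)
    (h1A : (1 : G) ∈ α.coeff.support) (h1B : (1 : G) ∈ β.coeff.support) :
    ∀ e ∈ β.coeff.support⁻¹ * α.coeff.support, ∀ f ∈ β.coeff.support * α.coeff.support⁻¹,
      ∃ e' ∈ β.coeff.support⁻¹ * α.coeff.support, ∃ f' ∈ β.coeff.support * α.coeff.support⁻¹,
        e' * f' = e * f ∧ (e', f') ≠ (e, f) := fun e he f hf =>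
  UniqueMul.exists_of_not <| not_uniqueMul_inv_mul_mul_inv
    (fun _ ha _ hb => MonoidAlgebra.not_uniqueMul_support_of_mul_eq_one hαβ ha hb)
    hnontriv h1A h1B e he f hf

/-- Let `α` be a nontrivial unit of `K[G]` with inverse `β`, with supports `A` and `B`
respectively, and suppose `1 ∈ A ∩ B`.  Then `E = B⁻¹A` and `F = BA⁻¹` witness the
failure of the unique product property: every element of the multiset `EF` occurs with
multiplicity at least `2`. -/
theorem unit_supports_non_unique_products {K : Type*} [Field K] {G : Type*} [Group G]
    [DecidableEq G] (α β : MonoidAlgebra K G)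
    (hαβ : α * β = 1) (hβα : β * α = 1)
    (hnontriv : 2 ≤ α.coeff.support.card)
    (h1A : (1 : G) ∈ α.coeff.support) (h1B : (1 : G) ∈ β.coeff.support) :
    ∀ e ∈ β.coeff.support⁻¹ * α.coeff.support, ∀ f ∈ β.coeff.support * α.coeff.support⁻¹,
      ∃ e' ∈ β.coeff.support⁻¹ * α.coeff.support, ∃ f' ∈ β.coeff.support * α.coeff.support⁻¹,
        e' * f' = e * f ∧ (e', f') ≠ (e, f) :=
  unit_supports_non_unique_products_general α β hαβ hnontriv h1A h1B
end

section
/- In the group P = ⟨a, b | b⁻¹a²b = a⁻², a⁻¹b²a = b⁻²⟩, the elements x = a², y = b², z = abab pairwise commute. -/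
/-!
Both relations say that a generator conjugates the square of the other one to its inverse:
`b` inverts `a²` and `a` inverts `b²`. An element inverting `x` squares to an element commuting
with `x`, and multiplying an inverting element by something commuting with `x` keeps it inverting.
Hence `b²` and `(ab)² = abab` commute with `a²` (as `b` and `ab` invert it), and `abab` commutes
with `b²` (as `ab` inverts it).
-/

/-- The relators of the Promislow/Hantzsche–Wendt group
`P = ⟨a, b ∣ b⁻¹a²b = a⁻², a⁻¹b²a = b⁻²⟩`, over generators indexed by `Fin 2`
(`0 ↦ a`, `1 ↦ b`). -/
def promislowRels : Set (FreeGroup (Fin 2)) :=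
  { (FreeGroup.of 1)⁻¹ * (FreeGroup.of 0) ^ 2 * (FreeGroup.of 1) * (FreeGroup.of 0) ^ 2,
    (FreeGroup.of 0)⁻¹ * (FreeGroup.of 1) ^ 2 * (FreeGroup.of 0) * (FreeGroup.of 1) ^ 2 }

/-- The Promislow group `P`. -/
def PromislowGroup : Type := PresentedGroup promislowRels

instance : Group PromislowGroup := by unfold PromislowGroup; infer_instance

section Inversion

variable {G : Type*} [Group G] {g x : G}

theorem semiconjBy_inv_iff_inv_mul_mul_mul_eq_one :
    SemiconjBy g x x⁻¹ ↔ g⁻¹ * x * g * x = 1 := by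
  rw [SemiconjBy, eq_inv_mul_iff_mul_eq, mul_assoc, mul_assoc, inv_mul_eq_one, ← mul_assoc,
    eq_comm]

theorem SemiconjBy.commute_sq_of_inv (hg : SemiconjBy g x x⁻¹) : Commute x (g ^ 2) := by
  have hg' : SemiconjBy g x⁻¹ x := by simpa using hg.inv_right
  rw [pow_two]
  exact (hg'.mul_left hg).symm

end Inversion

namespace PromislowGroup

def a : PromislowGroup := PresentedGroup.of 0

def b : PromislowGroup := PresentedGroup.of 1

theorem b_semiconjBy_a_sq : SemiconjBy b (a ^ 2) (a ^ 2)⁻¹ :=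
  semiconjBy_inv_iff_inv_mul_mul_mul_eq_one.mpr (PresentedGroup.one_of_mem (Set.mem_insert _ _))

theorem a_semiconjBy_b_sq : SemiconjBy a (b ^ 2) (b ^ 2)⁻¹ :=
  semiconjBy_inv_iff_inv_mul_mul_mul_eq_one.mpr
    (PresentedGroup.one_of_mem (Set.mem_insert_of_mem _ rfl))

theorem ab_semiconjBy_a_sq : SemiconjBy (a * b) (a ^ 2) (a ^ 2)⁻¹ :=
  SemiconjBy.mul_left (Commute.self_pow a 2).inv_right b_semiconjBy_a_sq

theorem ab_semiconjBy_b_sq : SemiconjBy (a * b) (b ^ 2) (b ^ 2)⁻¹ :=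
  a_semiconjBy_b_sq.mul_left (Commute.self_pow b 2)

end PromislowGroup

/-- In `P = ⟨a, b ∣ b⁻¹a²b = a⁻², a⁻¹b²a = b⁻²⟩` the elements
`x = a²`, `y = b²`, `z = abab` pairwise commute. -/
theorem promislow_xyz_commute :
    let a : PromislowGroup := PresentedGroup.of 0
    let b : PromislowGroup := PresentedGroup.of 1
    Commute (a ^ 2) (b ^ 2) ∧ Commute (a ^ 2) (a * b * a * b) ∧
      Commute (b ^ 2) (a * b * a * b) := by
  intro a b
  rw [show a * b * a * b = (a * b) ^ 2 by rw [sq, ← mul_assoc]]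
  exact ⟨PromislowGroup.b_semiconjBy_a_sq.commute_sq_of_inv,
    PromislowGroup.ab_semiconjBy_a_sq.commute_sq_of_inv,
    PromislowGroup.ab_semiconjBy_b_sq.commute_sq_of_inv⟩
end

section
/- In the Fibonacci group F(n−1, n) = ⟨x₁, …, xₙ | x_i x_{i+1} ⋯ x_{i+n−2} = x_{i+n−1} (indices mod n)⟩ with n ≥ 4, the elements x₁², x₂², …, xₙ² are all equal; consequently x₁² = x₁x₂⋯xₙ is central in F(n−1, n). -/
/-- Relators of the Fibonacci group `F(n−1, n)`: for each `i` (mod `n`),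
`x_i x_{i+1} ⋯ x_{i+n−2} x_{i+n−1}⁻¹`. -/
def fibRels (n : ℕ) : Set (FreeGroup (ZMod n)) :=
  { w | ∃ i : ZMod n,
      w = (((List.range (n - 1)).map fun j => FreeGroup.of (i + (j : ZMod n))).prod) *
            (FreeGroup.of (i + ((n - 1 : ℕ) : ZMod n)))⁻¹ }

/-- The Fibonacci group `F(n−1, n)`. -/
abbrev FibonacciGroup (n : ℕ) : Type := PresentedGroup (fibRels n)

namespace FibAux

lemma norm_flat {α : Type} {G : Type*} (g : α → G) (c : ℕ → α) (l : List ℕ) :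
    List.map g (Bind.bind (m := List) l fun a : ℕ => Pure.pure (c a)) = l.map fun a : ℕ => g (c a) := by
  show List.map g (l.flatMap fun a : ℕ => [c a]) = _
  induction l with
  | nil => rfl
  | cons a l ih =>
    rw [List.flatMap_cons, List.map_append, List.map_cons, ih, List.map_cons, List.map_nil,
      List.singleton_append]

lemma prod_range_succ_back {G : Type*} [Monoid G] (f : ℕ → G) (m : ℕ) :
    ((List.range (m + 1)).map f).prod = ((List.range m).map f).prod * f m := by
  rw [List.range_succ, List.map_append, List.prod_append]; simp

lemma prod_range_succ_front {G : Type*} [Monoid G] (f : ℕ → G) (m : ℕ) :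
    ((List.range (m + 1)).map f).prod = f 0 * ((List.range m).map fun j => f (j + 1)).prod := by
  rw [List.range_succ_eq_map, List.map_cons, List.prod_cons, List.map_map]
  rfl

/-- The defining relation in the presented group. -/
lemma rel (n : ℕ) (i : ZMod n) :
    ((List.range (n - 1)).map fun j : ℕ =>
        (PresentedGroup.of (i + (j : ZMod n)) : FibonacciGroup n)).prod
      = PresentedGroup.of (i + ((n - 1 : ℕ) : ZMod n)) := by
  have hmem : (((List.range (n - 1)).map fun j : ℕ => FreeGroup.of (i + (j : ZMod n))).prod *
      (FreeGroup.of (i + ((n - 1 : ℕ) : ZMod n)))⁻¹) ∈ Subgroup.normalClosure (fibRels n) := by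
    refine Subgroup.subset_normalClosure ⟨i, ?_⟩
    rw [norm_flat]
  have h1 : (PresentedGroup.mk (fibRels n))
      (((List.range (n - 1)).map fun j : ℕ => FreeGroup.of (i + (j : ZMod n))).prod *
        (FreeGroup.of (i + ((n - 1 : ℕ) : ZMod n)))⁻¹) = 1 :=
    (QuotientGroup.eq_one_iff _).mpr hmem
  rw [map_mul, map_inv, map_list_prod, mul_inv_eq_one, List.map_map] at h1
  exact h1

end FibAux

/-- In `F(n−1, n)` with `n ≥ 4`, all the squares `x_i²` coincide, and
`x₁² = x₁x₂⋯xₙ` is central. -/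
theorem fibonacci_squares_eq_and_central (n : ℕ) (hn : 4 ≤ n) :
    (∀ i j : ZMod n,
        (PresentedGroup.of i : FibonacciGroup n) ^ 2 = (PresentedGroup.of j) ^ 2) ∧
    (PresentedGroup.of (0 : ZMod n) : FibonacciGroup n) ^ 2 =
        ((List.range n).map fun j =>
          (PresentedGroup.of ((j : ZMod n)) : FibonacciGroup n)).prod ∧
    ∀ g : FibonacciGroup n,
      Commute ((PresentedGroup.of (0 : ZMod n) : FibonacciGroup n) ^ 2) g := by
  haveI : NeZero n := ⟨by omega⟩
  set x : ZMod n → FibonacciGroup n := (fun i => PresentedGroup.of i) with hx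
  have hc : ((n - 1 : ℕ) : ZMod n) = -1 := by
    have h1 : ((n - 1 : ℕ) : ZMod n) = (n : ZMod n) - 1 := by
      push_cast [Nat.cast_sub (by omega : 1 ≤ n)]; ring
    simp [h1]
  obtain ⟨m, hm⟩ : ∃ m, n = m + 1 := ⟨n - 1, by omega⟩
  have hm1 : n - 1 = m := by omega
  set L : ZMod n → FibonacciGroup n :=
    (fun i => ((List.range (n - 1)).map fun j : ℕ => x (i + (j : ZMod n))).prod) with hL
  set Q : ZMod n → FibonacciGroup n :=
    (fun i => ((List.range n).map fun j : ℕ => x (i + (j : ZMod n))).prod) with hQ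
  have hrel : ∀ i, L i = x (i - 1) := by
    intro i
    have h := FibAux.rel n i
    rw [hc] at h
    rw [hL, sub_eq_add_neg]
    exact h
  -- back split of the full cyclic product
  have hA : ∀ i, Q i = L i * x (i - 1) := by
    intro i
    have h := FibAux.prod_range_succ_back (fun j : ℕ => x (i + (j : ZMod n))) m
    rw [hQ, hL]
    simp only [← hm, hm1] at h ⊢
    rw [h]
    congr 1
    rw [← hm1, hc, ← sub_eq_add_neg]
  -- front split of the full cyclic product
  have hB : ∀ i, Q i = x i * L (i + 1) := by
    intro i
    have h := FibAux.prod_range_succ_front (fun j : ℕ => x (i + (j : ZMod n))) m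
    rw [hQ, hL]
    simp only [← hm, hm1] at h ⊢
    rw [h]
    congr 1
    · norm_num
    · refine congrArg List.prod (List.map_congr_left fun j _ => ?_)
      congr 1
      push_cast
      ring
  have hQx : ∀ i, Q i = x i * x i := fun i => by rw [hB, hrel, add_sub_cancel_right]
  have hstep : ∀ i, x (i - 1) * x (i - 1) = x i * x i := by
    intro i
    rw [← hQx i, hA, hrel]
  -- all squares are equal
  have hsq : ∀ i j : ZMod n, x i ^ 2 = x j ^ 2 := by
    have key : ∀ (k : ℕ) (i : ZMod n), x (i - (k : ZMod n)) ^ 2 = x i ^ 2 := by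
      intro k
      induction k with
      | zero => simp
      | succ k ih =>
        intro i
        have h1 : i - ((k + 1 : ℕ) : ZMod n) = (i - (k : ZMod n)) - 1 := by push_cast; ring
        rw [h1, sq, sq, hstep, ← sq, ← sq, ih]
    intro i j
    have : j = i - (((i - j).val : ℕ) : ZMod n) := by
      rw [ZMod.natCast_val, ZMod.cast_id]; ring
    rw [this, key]
  refine ⟨fun i j => hsq i j, ?_, ?_⟩
  · rw [FibAux.norm_flat]
    have h0 : ((List.range n).map fun j : ℕ => x ((j : ZMod n))).prod = Q 0 := by
      rw [hQ]
      have he : (fun j : ℕ => x ((j : ZMod n))) = fun j : ℕ => x (0 + (j : ZMod n)) := by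
        funext j; rw [zero_add]
      rw [he]
    rw [h0, hQx, sq]
  · have hgen : ∀ i : ZMod n, Commute (x 0 ^ 2) (x i) := by
      intro i
      have e1 : x 0 ^ 2 = x i * L (i + 1) := by
        rw [hsq 0 i, sq, ← hQx, hB]
      have e2 : x 0 ^ 2 = L (i + 1) * x i := by
        rw [hsq 0 (i + 1), sq, ← hQx, hA, add_sub_cancel_right]
      show x 0 ^ 2 * x i = x i * x 0 ^ 2
      conv_lhs => rw [e1]
      conv_rhs => rw [e2]
      rw [mul_assoc]
    intro g
    have hg : g ∈ Subgroup.centralizer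
        {(PresentedGroup.of (0 : ZMod n) : FibonacciGroup n) ^ 2} := by
      refine PresentedGroup.generated_by _ _ ?_ g
      intro j
      rw [Subgroup.mem_centralizer_iff]
      intro h hh
      simp only [Set.mem_singleton_iff] at hh
      subst hh
      exact hgen j
    exact Subgroup.mem_centralizer_iff.mp hg _ rfl
end

section
/- In the group K_n = ⟨x₁, …, xₙ | x₁² = x₂² = … = xₙ²⟩ (n ≥ 2), every element can be written uniquely in the normal form x_{i₁}⋯x_{i_k}·xₙ^z where consecutive indices i_u, i_{u+1} are distinct, i_k ≠ n, and z ∈ ℤ. -/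
/-!
Van der Waerden's trick. Fix the generator `x_ℓ` that carries the power. Left multiplication
by a generator `x_j` is defined directly on normal forms: `x_j` is prepended, unless the form
already starts with `x_j`, in which case the two letters merge into `x_j² = x_ℓ²`, which is
central and is absorbed into the exponent. These maps are permutations whose squares all equal
the shift of the exponent by `2`, so they satisfy the defining relations and give an action of
`K_n` on normal forms. Evaluation of normal forms is equivariant for this action, and acting
with the value of a normal form on the empty one gives that normal form back, so evaluation
is a bijection.
-/

/-- Relators of `K_n = ⟨x₁, …, xₙ ∣ x₁² = x₂² = … = xₙ²⟩`. -/
def KnRels (n : ℕ) : Set (FreeGroup (Fin n)) :=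
  { w | ∃ i j : Fin n, w = (FreeGroup.of i) ^ 2 * ((FreeGroup.of j) ^ 2)⁻¹ }

/-- The group `K_n`, the free product of `n` infinite cyclic groups amalgamated
along the squares of the generators. -/
abbrev KnGroup (n : ℕ) : Type := PresentedGroup (KnRels n)

namespace KnGroup

variable {n : ℕ}

theorem of_sq_eq_of_sq (i j : Fin n) :
    (PresentedGroup.of i : KnGroup n) ^ 2 = PresentedGroup.of j ^ 2 := by
  have h : PresentedGroup.mk (KnRels n) (FreeGroup.of i ^ 2 * (FreeGroup.of j ^ 2)⁻¹) = 1 :=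
    (QuotientGroup.eq_one_iff _).mpr (Subgroup.subset_normalClosure ⟨i, j, rfl⟩)
  rwa [map_mul, map_inv, map_pow, map_pow, mul_inv_eq_one] at h

theorem commute_of_sq (i : Fin n) (x : KnGroup n) :
    Commute ((PresentedGroup.of i : KnGroup n) ^ 2) x := by
  have hx : x ∈ Subgroup.centralizer {(PresentedGroup.of i : KnGroup n) ^ 2} := by
    refine PresentedGroup.generated_by _ _ (fun j => ?_) x
    rintro _ rfl
    rw [of_sq_eq_of_sq i j]
    exact (Commute.self_pow (PresentedGroup.of j : KnGroup n) 2).symm.eq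
  exact Subgroup.mem_centralizer_iff.mp hx _ rfl

def IsNormalWord (ℓ : Fin n) (L : List (Fin n)) : Prop :=
  L.IsChain (· ≠ ·) ∧ L.getLast? ≠ some ℓ

abbrev NormalForm (ℓ : Fin n) := {p : List (Fin n) × ℤ // IsNormalWord ℓ p.1}

def eval (ℓ : Fin n) (p : List (Fin n) × ℤ) : KnGroup n :=
  (p.1.map fun i => (PresentedGroup.of i : KnGroup n)).prod * PresentedGroup.of ℓ ^ p.2

@[simp]
theorem eval_nil (ℓ : Fin n) (z : ℤ) : eval ℓ ([], z) = PresentedGroup.of ℓ ^ z := by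
  simp [eval]

@[simp]
theorem eval_cons (ℓ i : Fin n) (L : List (Fin n)) (z : ℤ) :
    eval ℓ (i :: L, z) = PresentedGroup.of i * eval ℓ (L, z) := by
  simp [eval, mul_assoc]

theorem isNormalWord_nil (ℓ : Fin n) : IsNormalWord ℓ [] :=
  ⟨List.isChain_nil, by simp⟩

theorem IsNormalWord.of_cons {ℓ i : Fin n} {L : List (Fin n)} (h : IsNormalWord ℓ (i :: L)) :
    IsNormalWord ℓ L := by
  refine ⟨h.1.tail, ?_⟩
  cases L with
  | nil => simp
  | cons m L => simpa [List.getLast?_cons_cons] using h.2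

def mulGen (ℓ j : Fin n) : List (Fin n) × ℤ → List (Fin n) × ℤ
  | (i :: L, z) => if j = i then (L, z + 2) else (j :: i :: L, z)
  | ([], z) => if j = ℓ then ([], z + 1) else ([j], z)

theorem mulGen_of_isNormalWord_cons {ℓ i : Fin n} {L : List (Fin n)}
    (h : IsNormalWord ℓ (i :: L)) (z : ℤ) : mulGen ℓ i (L, z) = (i :: L, z) := by
  cases L with
  | nil =>
    have hiℓ : i ≠ ℓ := by rintro rfl; exact h.2 rfl
    simp [mulGen, hiℓ]
  | cons m L =>
    have him : i ≠ m := (List.isChain_cons_cons.mp h.1).1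
    simp [mulGen, him]

theorem IsNormalWord.mulGen {ℓ : Fin n} {p : List (Fin n) × ℤ} (h : IsNormalWord ℓ p.1)
    (j : Fin n) : IsNormalWord ℓ (mulGen ℓ j p).1 := by
  obtain ⟨L, z⟩ := p
  cases L with
  | nil =>
    by_cases hj : j = ℓ
    · simp [KnGroup.mulGen, hj, isNormalWord_nil]
    · simp [KnGroup.mulGen, hj, IsNormalWord]
  | cons i L =>
    by_cases hj : j = i
    · simpa [KnGroup.mulGen, hj] using h.of_cons
    · simp only [KnGroup.mulGen, if_neg hj]
      refine ⟨List.isChain_cons_cons.mpr ⟨hj, h.1⟩, ?_⟩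
      simpa [List.getLast?_cons_cons] using h.2

theorem mulGen_sub (ℓ j : Fin n) (p : List (Fin n) × ℤ) (c : ℤ) :
    mulGen ℓ j (p.1, p.2 - c) = ((mulGen ℓ j p).1, (mulGen ℓ j p).2 - c) := by
  obtain ⟨L, z⟩ := p
  cases L with
  | nil => by_cases hj : j = ℓ <;> simp [mulGen, hj]; ring
  | cons i L => by_cases hj : j = i <;> simp [mulGen, hj]; ring

theorem mulGen_mulGen {ℓ : Fin n} {p : List (Fin n) × ℤ} (h : IsNormalWord ℓ p.1)
    (j : Fin n) : mulGen ℓ j (mulGen ℓ j p) = (p.1, p.2 + 2) := by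
  obtain ⟨L, z⟩ := p
  cases L with
  | nil => by_cases hj : j = ℓ <;> simp [mulGen, hj]; ring
  | cons i L =>
    by_cases hj : j = i
    · subst hj
      simpa [mulGen] using mulGen_of_isNormalWord_cons h (z + 2)
    · simp [mulGen, hj]

theorem eval_mulGen (ℓ j : Fin n) (p : List (Fin n) × ℤ) :
    eval ℓ (mulGen ℓ j p) = PresentedGroup.of j * eval ℓ p := by
  obtain ⟨L, z⟩ := p
  cases L with
  | nil =>
    by_cases hj : j = ℓ
    · simp [mulGen, hj, zpow_add_one, ← zpow_one_add, add_comm]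
    · simp [mulGen, hj]
  | cons i L =>
    by_cases hj : j = i
    · subst hj
      calc eval ℓ (mulGen ℓ j (j :: L, z)) = eval ℓ (L, z) * PresentedGroup.of ℓ ^ 2 := by
            simp [mulGen, eval, zpow_add, mul_assoc]
        _ = PresentedGroup.of ℓ ^ 2 * eval ℓ (L, z) := (commute_of_sq ℓ _).eq.symm
        _ = PresentedGroup.of j * eval ℓ (j :: L, z) := by
            rw [of_sq_eq_of_sq ℓ j, sq, eval_cons, mul_assoc]
    · simp [mulGen, hj]

def mulGenPerm (ℓ j : Fin n) : Equiv.Perm (NormalForm ℓ) where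
  toFun p := ⟨mulGen ℓ j p, p.2.mulGen j⟩
  invFun p := ⟨((mulGen ℓ j p).1, (mulGen ℓ j p).2 - 2), p.2.mulGen j⟩
  left_inv p := Subtype.ext <| by simp [mulGen_mulGen p.2]
  right_inv p := Subtype.ext <| by simp [mulGen_sub, mulGen_mulGen p.2]

theorem mulGenPerm_sq_eq (ℓ i j : Fin n) : mulGenPerm ℓ i ^ 2 = mulGenPerm ℓ j ^ 2 := by
  ext p : 2
  simp [sq, mulGenPerm, mulGen_mulGen p.2]

def action (ℓ : Fin n) : KnGroup n →* Equiv.Perm (NormalForm ℓ) :=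
  PresentedGroup.toGroup (f := mulGenPerm ℓ) <| by
    rintro _ ⟨i, j, rfl⟩
    simp [mulGenPerm_sq_eq ℓ i j]

theorem action_of (ℓ j : Fin n) : action ℓ (PresentedGroup.of j) = mulGenPerm ℓ j :=
  PresentedGroup.toGroup.of _

theorem eval_action (ℓ : Fin n) (g : KnGroup n) (p : NormalForm ℓ) :
    eval ℓ (action ℓ g p) = g * eval ℓ p := by
  let equivariant : Subgroup (KnGroup n) :=
    { carrier := {g | ∀ p : NormalForm ℓ, eval ℓ (action ℓ g p) = g * eval ℓ p}
      one_mem' := by simp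
      mul_mem' := fun ha hb p => by
        rw [map_mul, Equiv.Perm.mul_apply, ha, hb, mul_assoc]
      inv_mem' := fun ha p => by
        rw [eq_inv_mul_iff_mul_eq, ← ha, map_inv, Equiv.Perm.coe_inv,
          Equiv.apply_symm_apply] }
  refine PresentedGroup.generated_by _ equivariant (fun j p => ?_) g p
  rw [action_of]
  exact eval_mulGen ℓ j p

theorem mulGenPerm_self_nil (ℓ : Fin n) (w : ℤ) :
    mulGenPerm ℓ ℓ ⟨([], w), isNormalWord_nil ℓ⟩ = ⟨([], w + 1), isNormalWord_nil ℓ⟩ :=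
  Subtype.ext <| by simp [mulGenPerm, mulGen]

theorem action_zpow_nil (ℓ : Fin n) (z w : ℤ) :
    (action ℓ (PresentedGroup.of ℓ ^ z) ⟨([], w), isNormalWord_nil ℓ⟩).1 = ([], w + z) := by
  induction z using Int.induction_on generalizing w with
  | zero => simp
  | succ k ih =>
    rw [zpow_add_one, map_mul, Equiv.Perm.mul_apply, action_of, mulGenPerm_self_nil, ih]
    ring_nf
  | pred k ih =>
    have h : (mulGenPerm ℓ ℓ)⁻¹ ⟨([], w), isNormalWord_nil ℓ⟩ =
        ⟨([], w - 1), isNormalWord_nil ℓ⟩ := by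
      rw [Equiv.Perm.inv_eq_iff_eq, mulGenPerm_self_nil, sub_add_cancel]
    rw [zpow_sub_one, map_mul, Equiv.Perm.mul_apply, map_inv, action_of, h, ih]
    ring_nf

theorem action_eval_nil {ℓ : Fin n} (p : NormalForm ℓ) :
    action ℓ (eval ℓ p) ⟨([], 0), isNormalWord_nil ℓ⟩ = p := by
  obtain ⟨⟨L, z⟩, hL⟩ := p
  induction L with
  | nil => exact Subtype.ext (by simpa using action_zpow_nil ℓ z 0)
  | cons i L ih =>
    rw [eval_cons, map_mul, Equiv.Perm.mul_apply, ih hL.of_cons, action_of]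
    exact Subtype.ext (mulGen_of_isNormalWord_cons hL z)

def normalFormEquiv (ℓ : Fin n) : NormalForm ℓ ≃ KnGroup n where
  toFun p := eval ℓ p
  invFun g := action ℓ g ⟨([], 0), isNormalWord_nil ℓ⟩
  left_inv := action_eval_nil
  right_inv g := by simp [eval_action]

end KnGroup

/-- Every element of `K_n` (`n ≥ 2`) has a unique normal form
`x_{i₁} ⋯ x_{i_k} · xₙ^z` with consecutive indices distinct, `i_k ≠ n`, `z ∈ ℤ`. -/
theorem Kn_normal_form (n : ℕ) (hn : 2 ≤ n) (g : KnGroup n) :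
    ∃! p : List (Fin n) × ℤ,
      List.Chain' (· ≠ ·) p.1 ∧
      p.1.getLast? ≠ some (⟨n - 1, by omega⟩ : Fin n) ∧
      g = (p.1.map fun i => (PresentedGroup.of i : KnGroup n)).prod *
            (PresentedGroup.of (⟨n - 1, by omega⟩ : Fin n) : KnGroup n) ^ p.2 := by
  let e := KnGroup.normalFormEquiv (⟨n - 1, by omega⟩ : Fin n)
  refine ⟨(e.symm g).1, ⟨(e.symm g).2.1, (e.symm g).2.2, (e.apply_symm_apply g).symm⟩, ?_⟩
  rintro q ⟨hq₁, hq₂, rfl⟩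
  exact congrArg Subtype.val (e.symm_apply_apply ⟨q, hq₁, hq₂⟩).symm
end

section
/- Let H be a recursively presented group and w a non-trivial central element of H. If the quotient group L = H/⟨w⟩ has solvable word problem, then H has solvable word problem. -/
/-!
An element `g` of `H` is non-trivial exactly when either its image in `H ⧸ ⟨w⟩` is
non-trivial, which is decidable by assumption, or `g * w ^ m = 1` or `g * w⁻¹ ^ m = 1` for some
`m` with `w ^ m ≠ 1`. The condition `w ^ m ≠ 1` says that `orderOf w` does not divide `m`, which
is decidable for the fixed number `orderOf w` (the algorithm is not uniform in `w`), and the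
equations can be enumerated since the word problem of `H` is r.e. So the complement of the word
problem is r.e. as well, and Post's theorem makes the word problem decidable.
-/

/-- Evaluation of a word (a list of generators with signs) in a group. -/
def wordProd {κ : Type*} {G : Type*} [Group G] (x : κ → G) (l : List (κ × Bool)) : G :=
  (l.map fun p => if p.2 then x p.1 else (x p.1)⁻¹).prod

namespace REPred

variable {α : Type*} [Primcodable α]

theorem comp {β : Type*} [Primcodable β] {p : β → Prop} {f : α → β} (hp : REPred p)
    (hf : Computable f) : REPred fun a => p (f a) :=
  Partrec.comp hp hf

theorem and {p q : α → Prop} (hp : REPred p) (hq : REPred q) : REPred fun a => p a ∧ q a :=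
  (Partrec.bind hp (hq.comp Computable.fst).to₂).dom_re.of_eq fun a => by
    simp [Part.bind_dom, Part.assert]

theorem or {p q : α → Prop} (hp : REPred p) (hq : REPred q) : REPred fun a => p a ∨ q a := by
  obtain ⟨k, hk, H⟩ := Partrec.merge' hp hq
  exact hk.dom_re.of_eq fun a => by simp [(H a).2, Part.assert]

open Nat.Partrec.Code in
/-- Dovetailing: search simultaneously for the witness `n` and for the number of steps after which
the semi-decision procedure for `p a n` halts. -/
theorem exists_nat {p : α × ℕ → Prop} (hp : REPred p) : REPred fun a => ∃ n, p (a, n) := by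
  obtain ⟨c, hc⟩ := Nat.Partrec.Code.exists_code.1 hp
  have hdom : ∀ a n, p (a, n) ↔ (eval c (Encodable.encode (a, n))).Dom := fun a n => by
    simp [hc, Encodable.encodek, Part.assert]
  let f : α → ℕ → Option ℕ := fun a m => evaln m.unpair.2 c (Encodable.encode (a, m.unpair.1))
  have hf : Computable₂ f := Primrec.to_comp <| primrec_evaln.comp
    (((Primrec.snd.comp (Primrec.unpair.comp Primrec.snd)).pair (Primrec.const c)).pair
      (Primrec.encode.comp (Primrec.fst.pair (Primrec.fst.comp (Primrec.unpair.comp Primrec.snd)))))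
  refine (Partrec.rfindOpt hf).dom_re.of_eq fun a => ?_
  rw [Nat.rfindOpt_dom]
  constructor
  · rintro ⟨m, x, hx⟩
    exact ⟨m.unpair.1, (hdom _ _).2 (Part.dom_iff_mem.2 ⟨_, evaln_complete.2 ⟨_, hx⟩⟩)⟩
  · rintro ⟨n, hn⟩
    obtain ⟨x, hx⟩ := Part.dom_iff_mem.1 ((hdom _ _).1 hn)
    obtain ⟨s, hs⟩ := evaln_complete.1 hx
    exact ⟨Nat.pair n s, x, by simpa [f] using hs⟩

end REPred

theorem computablePred_pow_eq_one {M : Type*} [Monoid M] (w : M) :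
    ComputablePred fun m : ℕ => w ^ m = 1 :=
  (Primrec.eq.comp (Primrec.nat_mod.comp Primrec.id (Primrec.const (orderOf w)))
    (Primrec.const 0)).computablePred.of_eq fun m => by
      rw [id, ← Nat.dvd_iff_mod_eq_zero, orderOf_dvd_iff_pow_eq_one]

theorem ne_one_iff_notMem_zpowers_or_exists_pow {G : Type*} [Group G] (w g : G) :
    g ≠ 1 ↔ g ∉ Subgroup.zpowers w ∨ ∃ m : ℕ, w ^ m ≠ 1 ∧ (g * w ^ m = 1 ∨ g * w⁻¹ ^ m = 1) := by
  constructor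
  · intro hg
    refine or_iff_not_imp_left.2 fun hmem => ?_
    obtain ⟨n, rfl⟩ := Subgroup.mem_zpowers_iff.1 (not_not.1 hmem)
    obtain ⟨m, rfl | rfl⟩ := Int.eq_nat_or_neg n
    · exact ⟨m, by simpa using hg, Or.inr (by simp [inv_pow])⟩
    · exact ⟨m, by simpa using hg, Or.inl (by simp)⟩
  · rintro (hg | ⟨m, hm, hg | hg⟩) rfl
    · exact hg (one_mem _)
    · exact hm (by simpa using hg)
    · exact hm (by simpa [inv_pow] using hg)

section WordProd

variable {κ G : Type*} [Group G]

theorem wordProd_append (x : κ → G) (l₁ l₂ : List (κ × Bool)) :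
    wordProd x (l₁ ++ l₂) = wordProd x l₁ * wordProd x l₂ := by
  simp [wordProd]

theorem wordProd_eq_lift_mk (x : κ → G) (l : List (κ × Bool)) :
    wordProd x l = FreeGroup.lift x (FreeGroup.mk l) := by
  rw [FreeGroup.lift_mk, wordProd]
  congr 1
  exact List.map_congr_left fun p _ => by cases p.2 <;> rfl

theorem wordProd_surjective [DecidableEq κ] {x : κ → G} (hx : Subgroup.closure (Set.range x) = ⊤) :
    Function.Surjective (wordProd x) := by
  intro g
  obtain ⟨z, rfl⟩ : g ∈ (FreeGroup.lift x).range := by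
    rw [FreeGroup.range_lift_eq_closure, hx]
    trivial
  exact ⟨z.toWord, by rw [wordProd_eq_lift_mk, FreeGroup.mk_toWord]⟩

theorem exists_primrec_wordProd_eq_pow [Primcodable κ] (x : κ → G) (u : List (κ × Bool)) :
    ∃ f : ℕ → List (κ × Bool), Primrec f ∧ ∀ n, wordProd x (f n) = wordProd x u ^ n := by
  refine ⟨fun n => (List.range n).flatMap fun _ => u,
    Primrec.list_flatMap Primrec.list_range (Primrec.const u).to₂, fun n => ?_⟩
  induction n with
  | zero => simp [wordProd]
  | succ n ih =>
    simp only [List.range_succ, List.flatMap_append, wordProd_append] at ih ⊢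
    simp [ih, pow_succ]

theorem computablePred_wordProd_eq_one_of_computablePred_mem_zpowers [Primcodable κ]
    {x : κ → G} (hx : Function.Surjective (wordProd x)) (w : G)
    (hre : REPred fun l => wordProd x l = 1)
    (hmem : ComputablePred fun l => wordProd x l ∈ Subgroup.zpowers w) :
    ComputablePred fun l => wordProd x l = 1 := by
  obtain ⟨u, hu⟩ := hx w
  obtain ⟨u', hu'⟩ := hx w⁻¹
  obtain ⟨f, hf, hfu⟩ := exists_primrec_wordProd_eq_pow x u
  obtain ⟨f', hf', hfu'⟩ := exists_primrec_wordProd_eq_pow x u'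
  have hsearch : ∀ g : ℕ → List (κ × Bool), Primrec g →
      REPred fun p : List (κ × Bool) × ℕ => wordProd x (p.1 ++ g p.2) = 1 := fun g hg =>
    hre.comp (Primrec.list_append.comp Primrec.fst (hg.comp Primrec.snd)).to_comp
  have hcompl : REPred fun l => wordProd x l ≠ 1 := by
    refine (hmem.not.to_re.or (REPred.exists_nat
      (((computablePred_pow_eq_one w).not.to_re.comp Computable.snd).and
        ((hsearch f hf).or (hsearch f' hf'))))).of_eq fun l => ?_
    simp only [wordProd_append, hfu, hfu', hu, hu']
    exact (ne_one_iff_notMem_zpowers_or_exists_pow w _).symm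
  exact ComputablePred.computable_iff_re_compl_re'.2 ⟨hre, hcompl⟩

end WordProd

theorem solvable_wp_of_central_quotient_general {k : ℕ} (rels : Set (FreeGroup (Fin k)))
    (w : PresentedGroup rels)
    [(Subgroup.zpowers w).Normal]
    (hre : REPred (fun l : List (Fin k × Bool) =>
      wordProd (fun i => (PresentedGroup.of i : PresentedGroup rels)) l = 1))
    (hquot : ComputablePred (fun l : List (Fin k × Bool) =>
      (QuotientGroup.mk (wordProd (fun i => (PresentedGroup.of i : PresentedGroup rels)) l) :
        PresentedGroup rels ⧸ Subgroup.zpowers w) = 1)) :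
    ComputablePred (fun l : List (Fin k × Bool) =>
      wordProd (fun i => (PresentedGroup.of i : PresentedGroup rels)) l = 1) :=
  computablePred_wordProd_eq_one_of_computablePred_mem_zpowers
    (wordProd_surjective (PresentedGroup.closure_range_of rels)) w hre
    (hquot.of_eq fun _ => QuotientGroup.eq_one_iff _)

/-- If `H` is a recursively presented group (on finitely many generators), `w` is a
non-trivial central element of `H`, and the quotient `L = H/⟨w⟩` has solvable word
problem, then `H` has solvable word problem. -/
theorem solvable_wp_of_central_quotient {k : ℕ} (rels : Set (FreeGroup (Fin k)))
    (w : PresentedGroup rels) (hw1 : w ≠ 1) (hwc : w ∈ Subgroup.center (PresentedGroup rels))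
    [(Subgroup.zpowers w).Normal]
    (hre : REPred (fun l : List (Fin k × Bool) =>
      wordProd (fun i => (PresentedGroup.of i : PresentedGroup rels)) l = 1))
    (hquot : ComputablePred (fun l : List (Fin k × Bool) =>
      (QuotientGroup.mk (wordProd (fun i => (PresentedGroup.of i : PresentedGroup rels)) l) :
        PresentedGroup rels ⧸ Subgroup.zpowers w) = 1)) :
    ComputablePred (fun l : List (Fin k × Bool) =>
      wordProd (fun i => (PresentedGroup.of i : PresentedGroup rels)) l = 1) :=
  solvable_wp_of_central_quotient_general rels w hre hquot
end

section
/- The group H₄ = F(3,4) = ⟨x₁, x₂, x₃, x₄ | x₂x₃x₄ = x₁, x₃x₄x₁ = x₂, x₄x₁x₂ = x₃, x₁x₂x₃ = x₄⟩ is isomorphic to the polycyclic group with presentation ⟨r, a, b, z | r² = z, a^r = a⁻¹, b^r = b⁻¹, b^a = bz², z central⟩, via r ↦ x₁, a ↦ x₁x₄⁻¹, b ↦ x₁x₂x₄⁻², z ↦ x₁x₂x₃x₄. -/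
/-- Relators of the Fibonacci group `H₄ = F(3,4)` on generators `x₁, x₂, x₃, x₄`
(indexed `0,1,2,3`): `x₂x₃x₄ = x₁`, `x₃x₄x₁ = x₂`, `x₄x₁x₂ = x₃`, `x₁x₂x₃ = x₄`. -/
def h4Rels : Set (FreeGroup (Fin 4)) :=
  { FreeGroup.of 1 * FreeGroup.of 2 * FreeGroup.of 3 * (FreeGroup.of 0)⁻¹,
    FreeGroup.of 2 * FreeGroup.of 3 * FreeGroup.of 0 * (FreeGroup.of 1)⁻¹,
    FreeGroup.of 3 * FreeGroup.of 0 * FreeGroup.of 1 * (FreeGroup.of 2)⁻¹,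
    FreeGroup.of 0 * FreeGroup.of 1 * FreeGroup.of 2 * (FreeGroup.of 3)⁻¹ }

/-- The Fibonacci group `H₄ = F(3,4)`. -/
abbrev H4 : Type := PresentedGroup h4Rels

/-- Relators of the polycyclic presentation
`⟨r, a, b, z ∣ r² = z, z central, a^r = a⁻¹, b^r = b⁻¹, b^a = bz²⟩`
(generators indexed `0 ↦ r`, `1 ↦ a`, `2 ↦ b`, `3 ↦ z`). -/
def h4PcRels : Set (FreeGroup (Fin 4)) :=
  { FreeGroup.of 0 ^ 2 * (FreeGroup.of 3)⁻¹,
    FreeGroup.of 3 * FreeGroup.of 0 * (FreeGroup.of 3)⁻¹ * (FreeGroup.of 0)⁻¹,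
    FreeGroup.of 3 * FreeGroup.of 1 * (FreeGroup.of 3)⁻¹ * (FreeGroup.of 1)⁻¹,
    FreeGroup.of 3 * FreeGroup.of 2 * (FreeGroup.of 3)⁻¹ * (FreeGroup.of 2)⁻¹,
    (FreeGroup.of 0)⁻¹ * FreeGroup.of 1 * FreeGroup.of 0 * FreeGroup.of 1,
    (FreeGroup.of 0)⁻¹ * FreeGroup.of 2 * FreeGroup.of 0 * FreeGroup.of 2,
    (FreeGroup.of 1)⁻¹ * FreeGroup.of 2 * FreeGroup.of 1 *
      (FreeGroup.of 2 * FreeGroup.of 3 ^ 2)⁻¹ }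

/-- The polycyclic group `⟨r, a, b, z ∣ r² = z, z central, a^r = a⁻¹, b^r = b⁻¹, b^a = bz²⟩`. -/
abbrev H4Pc : Type := PresentedGroup h4PcRels

/-!
In `H₄` the relations force `x₁² = x₂² = x₃² = x₄² = x₁x₂x₃x₄`, so this common square is central,
and with it the images of `r, a, b, z` satisfy the polycyclic relations. Conversely, in the
polycyclic group `r² = (ra)² = (rb)² = z`, which makes `x₁ ↦ r`, `x₂ ↦ rb`, `x₃ ↦ rbaz⁻¹`,
`x₄ ↦ ra` satisfy the Fibonacci relations. The two homomorphisms are inverse to each other on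
generators.
-/

theorem PresentedGroup.commute_of_forall_commute_of {α : Type*} {rels : Set (FreeGroup α)}
    {c : PresentedGroup rels} (h : ∀ i, Commute c (of i)) (g : PresentedGroup rels) :
    Commute c g :=
  (Subgroup.mem_centralizer_singleton_iff.mp <| PresentedGroup.generated_by rels _
    (fun i => Subgroup.mem_centralizer_singleton_iff.mpr (h i).symm) g).symm

theorem sq_mul_of_conj_eq_inv {G : Type*} [Group G] {g h : G} (hh : g⁻¹ * h * g = h⁻¹) :
    (g * h) ^ 2 = g ^ 2 := by
  calc (g * h) ^ 2 = g ^ 2 * (g⁻¹ * h * g) * h := by simp only [sq]; group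
    _ = g ^ 2 := by rw [hh]; group

local notation "x₁" => (PresentedGroup.of 0 : H4)
local notation "x₂" => (PresentedGroup.of 1 : H4)
local notation "x₃" => (PresentedGroup.of 2 : H4)
local notation "x₄" => (PresentedGroup.of 3 : H4)

local notation "r" => (PresentedGroup.of 0 : H4Pc)
local notation "a" => (PresentedGroup.of 1 : H4Pc)
local notation "b" => (PresentedGroup.of 2 : H4Pc)
local notation "z" => (PresentedGroup.of 3 : H4Pc)

namespace H4

theorem rel₁ : x₂ * x₃ * x₄ = x₁ :=
  PresentedGroup.mk_eq_mk_of_mul_inv_mem (x := .of 1 * .of 2 * .of 3) (y := .of 0)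
    (by simp [h4Rels])

theorem rel₂ : x₃ * x₄ * x₁ = x₂ :=
  PresentedGroup.mk_eq_mk_of_mul_inv_mem (x := .of 2 * .of 3 * .of 0) (y := .of 1)
    (by simp [h4Rels])

theorem rel₃ : x₄ * x₁ * x₂ = x₃ :=
  PresentedGroup.mk_eq_mk_of_mul_inv_mem (x := .of 3 * .of 0 * .of 1) (y := .of 2)
    (by simp [h4Rels])

theorem rel₄ : x₁ * x₂ * x₃ = x₄ :=
  PresentedGroup.mk_eq_mk_of_mul_inv_mem (x := .of 0 * .of 1 * .of 2) (y := .of 3)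
    (by simp [h4Rels])

theorem mul_mul_mul_eq_x₄_sq : x₁ * x₂ * x₃ * x₄ = x₄ ^ 2 := by
  rw [rel₄, sq]

theorem x₁_sq : x₁ ^ 2 = x₄ ^ 2 := by
  calc x₁ ^ 2 = x₁ * (x₂ * x₃ * x₄) := by rw [rel₁, sq]
    _ = x₄ ^ 2 := by rw [← mul_mul_mul_eq_x₄_sq]; group

theorem x₃_sq : x₃ ^ 2 = x₄ ^ 2 := by
  calc x₃ ^ 2 = x₄ * x₁ * x₂ * x₃ := by rw [rel₃, sq]
    _ = x₄ * (x₁ * x₂ * x₃) := by group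
    _ = x₄ ^ 2 := by rw [rel₄, sq]

theorem x₂_sq : x₂ ^ 2 = x₄ ^ 2 := by
  calc x₂ ^ 2 = x₃ * x₄ * x₁ * x₂ := by rw [rel₂, sq]
    _ = x₃ * (x₄ * x₁ * x₂) := by group
    _ = x₄ ^ 2 := by rw [rel₃, ← sq, x₃_sq]

theorem x₄_sq_commute (g : H4) : Commute (x₄ ^ 2) g := by
  refine PresentedGroup.commute_of_forall_commute_of (fun i => ?_) g
  fin_cases i
  · exact x₁_sq ▸ Commute.pow_self _ _
  · exact x₂_sq ▸ Commute.pow_self _ _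
  · exact x₃_sq ▸ Commute.pow_self _ _
  · exact Commute.pow_self _ _

theorem pc_rel_conj_r_a : x₁⁻¹ * (x₁ * x₄⁻¹) * x₁ = (x₁ * x₄⁻¹)⁻¹ := by
  calc x₁⁻¹ * (x₁ * x₄⁻¹) * x₁ = x₄⁻¹ * x₁ ^ 2 * x₁⁻¹ := by group
    _ = (x₁ * x₄⁻¹)⁻¹ := by rw [x₁_sq]; group

theorem pc_rel_conj_r_b :
    x₁⁻¹ * (x₁ * x₂ * (x₄ ^ 2)⁻¹) * x₁ = (x₁ * x₂ * (x₄ ^ 2)⁻¹)⁻¹ := by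
  calc x₁⁻¹ * (x₁ * x₂ * (x₄ ^ 2)⁻¹) * x₁ = x₂ * (x₁ ^ 2)⁻¹ * x₁ := by
        rw [x₁_sq]; group
    _ = x₂ ^ 2 * x₂⁻¹ * x₁⁻¹ := by group
    _ = (x₁ * x₂ * (x₄ ^ 2)⁻¹)⁻¹ := by rw [x₂_sq]; group

theorem pc_rel_conj_a_b :
    (x₁ * x₄⁻¹)⁻¹ * (x₁ * x₂ * (x₄ ^ 2)⁻¹) * (x₁ * x₄⁻¹) =
      x₁ * x₂ * (x₄ ^ 2)⁻¹ * (x₁ * x₂ * x₃ * x₄) ^ 2 := by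
  calc (x₁ * x₄⁻¹)⁻¹ * (x₁ * x₂ * (x₄ ^ 2)⁻¹) * (x₁ * x₄⁻¹)
      = x₄ * x₂ * (x₁ ^ 2)⁻¹ * x₁ * x₄⁻¹ := by rw [x₁_sq]; group
    _ = x₄ * (x₃ * x₄ * x₁) * x₁⁻¹ * x₄⁻¹ := by rw [rel₂]; group
    _ = x₄ * x₃⁻¹ * x₃ ^ 2 := by group
    _ = x₁ * x₂ * x₃ * x₃⁻¹ * x₄ ^ 2 := by rw [x₃_sq, rel₄]
    _ = x₁ * x₂ * (x₄ ^ 2)⁻¹ * (x₁ * x₂ * x₃ * x₄) ^ 2 := by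
      rw [mul_mul_mul_eq_x₄_sq]; group

end H4

namespace H4Pc

theorem r_sq : r ^ 2 = z :=
  PresentedGroup.mk_eq_mk_of_mul_inv_mem (x := .of 0 ^ 2) (y := .of 3) (by simp [h4PcRels])

theorem z_commute (g : H4Pc) : Commute z g := by
  refine PresentedGroup.commute_of_forall_commute_of (fun i => ?_) g
  refine commutatorElement_eq_one_iff_commute.mp ?_
  fin_cases i
  · exact PresentedGroup.one_of_mem (rels := h4PcRels)
      (x := .of 3 * .of 0 * (.of 3)⁻¹ * (.of 0)⁻¹) (by simp [h4PcRels])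
  · exact PresentedGroup.one_of_mem (rels := h4PcRels)
      (x := .of 3 * .of 1 * (.of 3)⁻¹ * (.of 1)⁻¹) (by simp [h4PcRels])
  · exact PresentedGroup.one_of_mem (rels := h4PcRels)
      (x := .of 3 * .of 2 * (.of 3)⁻¹ * (.of 2)⁻¹) (by simp [h4PcRels])
  · exact commutatorElement_self _

theorem conj_r_a : r⁻¹ * a * r = a⁻¹ :=
  eq_inv_of_mul_eq_one_left <| PresentedGroup.one_of_mem (rels := h4PcRels)
    (x := (.of 0)⁻¹ * .of 1 * .of 0 * .of 1) (by simp [h4PcRels])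

theorem conj_r_b : r⁻¹ * b * r = b⁻¹ :=
  eq_inv_of_mul_eq_one_left <| PresentedGroup.one_of_mem (rels := h4PcRels)
    (x := (.of 0)⁻¹ * .of 2 * .of 0 * .of 2) (by simp [h4PcRels])

theorem conj_a_b : a⁻¹ * b * a = b * z ^ 2 :=
  PresentedGroup.mk_eq_mk_of_mul_inv_mem (x := (.of 1)⁻¹ * .of 2 * .of 1)
    (y := FreeGroup.of 2 * FreeGroup.of 3 ^ 2) (by simp [h4PcRels])

theorem a_mul_r : a * r = r * a⁻¹ := by
  rw [← conj_r_a]; group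

theorem b_mul_a : b * a = a * b * z ^ 2 := by
  calc b * a = a * (a⁻¹ * b * a) := by group
    _ = a * b * z ^ 2 := by rw [conj_a_b]; group

theorem mul_a_sq : (r * a) ^ 2 = z := by
  rw [sq_mul_of_conj_eq_inv conj_r_a, r_sq]

theorem mul_b_sq : (r * b) ^ 2 = z := by
  rw [sq_mul_of_conj_eq_inv conj_r_b, r_sq]

theorem fib_rel₁ : r * b * (r * b * a * z⁻¹) * (r * a) = r := by
  calc r * b * (r * b * a * z⁻¹) * (r * a) = (r * b) ^ 2 * a * z⁻¹ * r * a := by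
        rw [sq]; group
    _ = a * r * a := by rw [mul_b_sq, (z_commute a).eq]; group
    _ = r := by rw [a_mul_r]; group

theorem fib_rel₂ : r * b * a * z⁻¹ * (r * a) * r = r * b := by
  calc r * b * a * z⁻¹ * (r * a) * r = r * b * a * z⁻¹ * r * (a * r) := by group
    _ = r * b * a * z⁻¹ * (r * r) * a⁻¹ := by rw [a_mul_r]; group
    _ = r * b := by rw [← sq r, r_sq]; group

theorem fib_rel₃ : r * a * r * (r * b) = r * b * a * z⁻¹ := by
  calc r * a * r * (r * b) = r * a * (r * r * b) := by group
    _ = r * (a * b * z ^ 2) * z⁻¹ := by rw [← sq r, r_sq, (z_commute b).eq]; group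
    _ = r * b * a * z⁻¹ := by rw [← b_mul_a]; group

theorem fib_rel₄ : r * (r * b) * (r * b * a * z⁻¹) = r * a := by
  calc r * (r * b) * (r * b * a * z⁻¹) = r * (r * b) ^ 2 * a * z⁻¹ := by rw [sq]; group
    _ = r * (z * a) * z⁻¹ := by rw [mul_b_sq]; group
    _ = r * a := by rw [(z_commute a).eq]; group

def imageInH4 : Fin 4 → H4
  | 0 => x₁
  | 1 => x₁ * x₄⁻¹
  | 2 => x₁ * x₂ * (x₄ ^ 2)⁻¹
  | 3 => x₁ * x₂ * x₃ * x₄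

theorem lift_imageInH4_eq_one : ∀ w ∈ h4PcRels, FreeGroup.lift imageInH4 w = 1 := by
  simp only [h4PcRels, Set.mem_insert_iff, Set.mem_singleton_iff, forall_eq_or_imp, forall_eq,
    map_mul, map_inv, map_pow, FreeGroup.lift_apply_of, imageInH4]
  have hz (g : H4) : Commute (x₁ * x₂ * x₃ * x₄) g :=
    H4.mul_mul_mul_eq_x₄_sq ▸ H4.x₄_sq_commute g
  exact ⟨mul_inv_eq_one.mpr (H4.x₁_sq.trans H4.mul_mul_mul_eq_x₄_sq.symm),
    commutatorElement_eq_one_iff_commute.mpr (hz _),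
    commutatorElement_eq_one_iff_commute.mpr (hz _),
    commutatorElement_eq_one_iff_commute.mpr (hz _),
    mul_eq_one_iff_eq_inv.mpr H4.pc_rel_conj_r_a, mul_eq_one_iff_eq_inv.mpr H4.pc_rel_conj_r_b,
    mul_inv_eq_one.mpr H4.pc_rel_conj_a_b⟩

def toH4 : H4Pc →* H4 := PresentedGroup.toGroup lift_imageInH4_eq_one

end H4Pc

namespace H4

def imageInH4Pc : Fin 4 → H4Pc
  | 0 => r
  | 1 => r * b
  | 2 => r * b * a * z⁻¹
  | 3 => r * a

theorem lift_imageInH4Pc_eq_one : ∀ w ∈ h4Rels, FreeGroup.lift imageInH4Pc w = 1 := by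
  simp only [h4Rels, Set.mem_insert_iff, Set.mem_singleton_iff, forall_eq_or_imp, forall_eq,
    map_mul, map_inv, FreeGroup.lift_apply_of, imageInH4Pc]
  exact ⟨mul_inv_eq_one.mpr H4Pc.fib_rel₁, mul_inv_eq_one.mpr H4Pc.fib_rel₂,
    mul_inv_eq_one.mpr H4Pc.fib_rel₃, mul_inv_eq_one.mpr H4Pc.fib_rel₄⟩

def toH4Pc : H4 →* H4Pc := PresentedGroup.toGroup lift_imageInH4Pc_eq_one

end H4

theorem H4Pc.toH4Pc_comp_toH4 : H4.toH4Pc.comp toH4 = MonoidHom.id H4Pc := by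
  refine PresentedGroup.ext fun i => ?_
  fin_cases i <;>
    simp only [MonoidHom.comp_apply, MonoidHom.id_apply, toH4, H4.toH4Pc, Fin.reduceFinMk,
      PresentedGroup.toGroup.of, imageInH4, H4.imageInH4Pc, map_mul, map_inv, map_pow]
  · calc r * (r * a)⁻¹ = r * a⁻¹ * r⁻¹ := by group
      _ = a := by rw [← conj_r_a]; group
  · calc r * (r * b) * ((r * a) ^ 2)⁻¹ = r ^ 2 * b * z⁻¹ := by
          rw [mul_a_sq, sq r]; group
      _ = b := by rw [r_sq, (z_commute b).eq]; group
  · rw [fib_rel₄, ← sq, mul_a_sq]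

theorem H4.toH4_comp_toH4Pc : H4Pc.toH4.comp toH4Pc = MonoidHom.id H4 := by
  refine PresentedGroup.ext fun i => ?_
  fin_cases i <;>
    simp only [MonoidHom.comp_apply, MonoidHom.id_apply, H4Pc.toH4, toH4Pc, Fin.reduceFinMk,
      PresentedGroup.toGroup.of, H4Pc.imageInH4, imageInH4Pc, map_mul, map_inv]
  · calc x₁ * (x₁ * x₂ * (x₄ ^ 2)⁻¹) = x₁ ^ 2 * x₂ * (x₄ ^ 2)⁻¹ := by
          rw [sq x₁]; group
      _ = x₂ := by rw [x₁_sq, (x₄_sq_commute x₂).eq]; group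
  · calc x₁ * (x₁ * x₂ * (x₄ ^ 2)⁻¹) * (x₁ * x₄⁻¹) * (x₁ * x₂ * x₃ * x₄)⁻¹
        = x₁ ^ 2 * x₂ * (x₄ ^ 2)⁻¹ * x₁ * x₄⁻¹ * (x₄ ^ 2)⁻¹ := by
          rw [mul_mul_mul_eq_x₄_sq, sq x₁]; group
      _ = x₂ * x₁ * x₄⁻¹ * (x₄ ^ 2)⁻¹ := by
          rw [x₁_sq, (x₄_sq_commute x₂).eq]; group
      _ = x₂ ^ 2 * x₃ * (x₄ ^ 2)⁻¹ := by rw [← rel₁, sq x₂]; group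
      _ = x₃ := by rw [x₂_sq, (x₄_sq_commute x₃).eq]; group
  · calc x₁ * (x₁ * x₄⁻¹) = x₁ ^ 2 * x₄⁻¹ := by rw [sq]; group
      _ = x₄ := by rw [x₁_sq]; group

/-- `H₄ = F(3,4)` is isomorphic to the polycyclic group above, via
`r ↦ x₁`, `a ↦ x₁x₄⁻¹`, `b ↦ x₁x₂x₄⁻²`, `z ↦ x₁x₂x₃x₄`. -/
theorem h4_iso_polycyclic :
    ∃ e : H4Pc ≃* H4,
      e (PresentedGroup.of 0) = PresentedGroup.of 0 ∧
      e (PresentedGroup.of 1) = PresentedGroup.of 0 * (PresentedGroup.of 3)⁻¹ ∧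
      e (PresentedGroup.of 2) =
        PresentedGroup.of 0 * PresentedGroup.of 1 * ((PresentedGroup.of 3) ^ 2)⁻¹ ∧
      e (PresentedGroup.of 3) =
        PresentedGroup.of 0 * PresentedGroup.of 1 * PresentedGroup.of 2 *
          PresentedGroup.of 3 :=
  ⟨H4Pc.toH4.toMulEquiv H4.toH4Pc H4Pc.toH4Pc_comp_toH4 H4.toH4_comp_toH4Pc, rfl, rfl, rfl, rfl⟩
end
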